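/- Given ε > 0, δ ∈ (0,1), population size N, and bound B = 1, if the sample size m satisfies (2mε²)·(N/(N-m+1)) ≥ ln(1/δ), then sampling m points uniformly without replacement from a finite {0,1}-valued population of size N with mean μ gives P(Z̄ - μ ≥ ε) ≤ δ. -/

import Mathlib

/-!
Serfling's martingale argument. Draw the sample one unit at a time and let `U k` be the mean of
the `N - k` units not drawn yet. The next unit `x` is uniform among them, so the increment
`U (k + 1) - U k = -(c x - U k) / (N - k - 1)` is centred and ranges over an interval of length
`1 / (N - k - 1)`: by Hoeffding's lemma its exponential moment is at most
`exp (t ^ 2 / (8 * (N - k - 1) ^ 2))`. Multiplying over the `m` draws bounds the exponential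
moments of `μ - U m = m / (N - m) * (Z̄ - μ)` by `exp (t ^ 2 * V / 8)`, where
`V = ∑ k < m, (N - k - 1)⁻² ≤ m (N - m + 1) / (N (N - m) ^ 2)`, and Chernoff's bound with the
optimal `t` gives `P (Z̄ - μ ≥ ε) ≤ exp (-2 m ε ^ 2 N / (N - m + 1))`.
-/

open Real Finset ProbabilityTheory MeasureTheory

theorem sum_exp_mul_sub_average_le {α : Type*} [Fintype α] [Nonempty α] {v : α → ℝ}
    {a b : ℝ} (hv : ∀ x, v x ∈ Set.Icc a b) (t : ℝ) :
    ∑ x, exp (t * (v x - (∑ y, v y) / Fintype.card α)) ≤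
      Fintype.card α * exp ((b - a) ^ 2 * t ^ 2 / 8) := by
  let : MeasurableSpace α := ⊤
  set μ := (PMF.uniformOfFintype α).toMeasure
  have hint (f : α → ℝ) : ∫ x, f x ∂μ = (∑ x, f x) / Fintype.card α := by
    rw [PMF.integral_eq_sum]
    simp [div_eq_inv_mul, mul_sum]
  have hab : a ≤ b := (hv (Classical.arbitrary α)).1.trans (hv _).2
  have hmgf := (hasSubgaussianMGF_of_mem_Icc (μ := μ) Measurable.of_discrete.aemeasurable
    (.of_forall hv)).mgf_le t
  rw [mgf, hint, hint, div_le_iff₀ (by positivity), mul_comm] at hmgf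
  refine hmgf.trans_eq ?_
  rw [NNReal.coe_pow, NNReal.coe_div, coe_nnnorm, norm_eq_abs, abs_of_nonneg (sub_nonneg.2 hab),
    NNReal.coe_ofNat]
  ring_nf

theorem card_filter_mul_exp_le_sum_exp {ι : Type*} (s : Finset ι) (f : ι → ℝ) {a t : ℝ}
    (ht : 0 ≤ t) : #{x ∈ s | a ≤ f x} * exp (t * a) ≤ ∑ x ∈ s, exp (t * f x) := by
  rw [← nsmul_eq_mul]
  calc #{x ∈ s | a ≤ f x} • exp (t * a) ≤ ∑ x ∈ s with a ≤ f x, exp (t * f x) :=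
        card_nsmul_le_sum _ _ _ fun x hx ↦ exp_le_exp.2 <| by gcongr; exact (mem_filter.1 hx).2
    _ ≤ ∑ x ∈ s, exp (t * f x) :=
        sum_le_sum_of_subset_of_nonneg (filter_subset _ _) fun _ _ _ ↦ (exp_pos _).le

theorem sum_range_inv_sq_le {N m : ℕ} (hmN : m < N) :
    ∑ j ∈ range m, 1 / ((N : ℝ) - j - 1) ^ 2 ≤
      (m : ℝ) * (N - m + 1) / (N * (N - m) ^ 2) := by
  induction m with
  | zero => simp
  | succ m ih =>
    have hm : (m : ℝ) + 2 ≤ N := by exact_mod_cast hmN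
    have gap : (m + 1 : ℝ) * (N - m) / (N * (N - m - 1) ^ 2) -
        m * (N - m + 1) / (N * (N - m) ^ 2) - 1 / ((N : ℝ) - m - 1) ^ 2 =
        m / (N * (N - m) ^ 2 * (N - m - 1)) := by
      have : (N : ℝ) - m - 1 ≠ 0 := by linarith
      have : (N : ℝ) - m ≠ 0 := by linarith
      have : (N : ℝ) ≠ 0 := by linarith
      field_simp
      ring
    have : 0 ≤ (m : ℝ) / (N * (N - m) ^ 2 * (N - m - 1)) := by
      have : (0 : ℝ) ≤ N - m - 1 := by linarith
      positivity
    calc ∑ j ∈ range (m + 1), 1 / ((N : ℝ) - j - 1) ^ 2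
        ≤ m * (N - m + 1) / (N * (N - m) ^ 2) + 1 / ((N : ℝ) - m - 1) ^ 2 := by
          rw [sum_range_succ]; gcongr; exact ih (by omega)
      _ ≤ (m + 1 : ℝ) * (N - m) / (N * (N - m - 1) ^ 2) := by linarith
      _ = _ := by push_cast; ring

section Sampling

variable {N : ℕ} (c : Fin N → ℝ)

/-- `N - k` is a real subtraction: the value is junk (a division by zero) when `k = N`. -/
noncomputable def unsampledMean {k : ℕ} (e : Fin k ↪ Fin N) : ℝ :=
  (∑ j, c j - ∑ i, c (e i)) / (N - k)

theorem sum_compl_range {k : ℕ} (e : Fin k ↪ Fin N) :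
    ∑ j : {j // j ∉ Set.range e}, c j = ∑ j, c j - ∑ i, c (e i) := by
  rw [eq_sub_iff_add_eq, ← Fintype.sum_subtype_add_sum_subtype (· ∈ Set.range e) c, add_comm]
  congr 1
  convert Fintype.sum_equiv (Equiv.ofInjective e e.injective) (fun i ↦ c (e i)) (fun j ↦ c j)
    fun _ ↦ rfl

theorem card_compl_range {k : ℕ} (e : Fin k ↪ Fin N) :
    Fintype.card {j // j ∉ Set.range e} = N - k := by
  rw [Fintype.card_subtype_compl, Fintype.card_fin, Set.card_range_of_injective e.injective]
  simp

theorem unsampledMean_eq_average {k : ℕ} (e : Fin k ↪ Fin N) :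
    unsampledMean c e =
      (∑ j : {j // j ∉ Set.range e}, c j) / Fintype.card {j // j ∉ Set.range e} := by
  have hk : k ≤ N := by simpa using Fintype.card_le_of_embedding e
  rw [unsampledMean, sum_compl_range, card_compl_range, Nat.cast_sub hk]

theorem unsampledMean_cons {k : ℕ} (hk : k + 1 < N) (e : Fin k ↪ Fin N)
    (x : {j // j ∉ Set.range e}) :
    unsampledMean c ((Equiv.embeddingFinSucc k (Fin N)).symm ⟨e, x⟩) =
      unsampledMean c e - (c x - unsampledMean c e) / (N - k - 1) := by
  have : (k : ℝ) + 1 < N := by exact_mod_cast hk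
  have : (N : ℝ) - k ≠ 0 := by linarith
  have : (N : ℝ) - k - 1 ≠ 0 := by linarith
  have : (N : ℝ) - (k + 1) ≠ 0 := by linarith
  simp only [unsampledMean, Equiv.coe_embeddingFinSucc_symm, Fin.sum_univ_succ, Fin.cons_zero,
    Fin.cons_succ, Nat.cast_succ]
  field_simp
  ring

theorem card_embedding_succ {k : ℕ} (hk : k ≤ N) :
    (Fintype.card (Fin (k + 1) ↪ Fin N) : ℝ) = (N - k) * Fintype.card (Fin k ↪ Fin N) := by
  simp [Fintype.card_embedding_eq, Nat.descFactorial_succ, Nat.cast_sub hk]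

theorem sum_exp_mul_mean_sub_unsampledMean_cons_le (hc : ∀ j, c j ∈ Set.Icc 0 1) {k : ℕ}
    (hk : k + 1 < N) (e : Fin k ↪ Fin N) (t : ℝ) :
    ∑ x : {j // j ∉ Set.range e},
        exp (t * ((∑ j, c j) / N -
          unsampledMean c ((Equiv.embeddingFinSucc k (Fin N)).symm ⟨e, x⟩))) ≤
      (N - k) * exp (t ^ 2 / 8 * (1 / ((N : ℝ) - k - 1) ^ 2)) *
        exp (t * ((∑ j, c j) / N - unsampledMean c e)) := by
  have hcard : Fintype.card {j // j ∉ Set.range e} = N - k := card_compl_range e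
  have : Nonempty {j // j ∉ Set.range e} := Fintype.card_pos_iff.1 (by omega)
  have hoeffding := sum_exp_mul_sub_average_le (fun x : {j // j ∉ Set.range e} ↦ hc x)
    (t / (N - k - 1))
  rw [← unsampledMean_eq_average, hcard, Nat.cast_sub (by omega)] at hoeffding
  have hsplit (x : {j // j ∉ Set.range e}) :
      exp (t * ((∑ j, c j) / N -
          unsampledMean c ((Equiv.embeddingFinSucc k (Fin N)).symm ⟨e, x⟩))) =
        exp (t / (N - k - 1) * (c x - unsampledMean c e)) *
          exp (t * ((∑ j, c j) / N - unsampledMean c e)) := by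
    rw [unsampledMean_cons c hk, ← exp_add]
    congr 1
    ring
  rw [Fintype.sum_congr _ _ hsplit, ← sum_mul]
  gcongr
  refine hoeffding.trans_eq ?_
  rw [div_pow]
  congr 2
  ring

theorem sum_exp_mul_mean_sub_unsampledMean_le (hc : ∀ j, c j ∈ Set.Icc 0 1) {k : ℕ}
    (hk : k < N) (t : ℝ) :
    ∑ e : Fin k ↪ Fin N, exp (t * ((∑ j, c j) / N - unsampledMean c e)) ≤
      Fintype.card (Fin k ↪ Fin N) *
        exp (t ^ 2 / 8 * ∑ j ∈ range k, 1 / ((N : ℝ) - j - 1) ^ 2) := by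
  induction k with
  | zero => simp [unsampledMean]
  | succ k ih =>
    rw [← (Equiv.embeddingFinSucc k (Fin N)).symm.sum_comp, Fintype.sum_sigma]
    calc _ ≤ ∑ e : Fin k ↪ Fin N, (N - k) * exp (t ^ 2 / 8 * (1 / ((N : ℝ) - k - 1) ^ 2)) *
            exp (t * ((∑ j, c j) / N - unsampledMean c e)) :=
          sum_le_sum fun e _ ↦ sum_exp_mul_mean_sub_unsampledMean_cons_le c hc hk e t
      _ ≤ (N - k) * exp (t ^ 2 / 8 * (1 / ((N : ℝ) - k - 1) ^ 2)) *
            (Fintype.card (Fin k ↪ Fin N) *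
              exp (t ^ 2 / 8 * ∑ j ∈ range k, 1 / ((N : ℝ) - j - 1) ^ 2)) := by
          rw [← mul_sum]
          have : (k : ℝ) ≤ N := by exact_mod_cast (by omega : k ≤ N)
          gcongr
          exact ih (by omega)
      _ = _ := by
          rw [card_embedding_succ (by omega), sum_range_succ, mul_add, exp_add]
          ring

theorem mean_sub_unsampledMean {m : ℕ} (hm : 0 < m) (hmN : m < N) (e : Fin m ↪ Fin N) :
    (∑ j, c j) / N - unsampledMean c e =
      m / (N - m) * ((m : ℝ)⁻¹ * ∑ i, c (e i) - (N : ℝ)⁻¹ * ∑ j, c j) := by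
  have : (0 : ℝ) < m := by exact_mod_cast hm
  have : (m : ℝ) < N := by exact_mod_cast hmN
  have : (N : ℝ) - m ≠ 0 := by linarith
  have : (N : ℝ) ≠ 0 := by linarith
  rw [unsampledMean]
  field_simp
  ring

theorem serfling_tail_bound (hc : ∀ j, c j ∈ Set.Icc 0 1) {m : ℕ} (hm : 0 < m) (hmN : m ≤ N)
    {ε : ℝ} (hε : 0 < ε) :
    (#{e : Fin m ↪ Fin N | ε ≤ (m : ℝ)⁻¹ * ∑ i, c (e i) - (N : ℝ)⁻¹ * ∑ j, c j} : ℝ) /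
        Fintype.card (Fin m ↪ Fin N) ≤
      exp (-(2 * m * ε ^ 2 * (N / (N - m + 1)))) := by
  obtain rfl | hmN := hmN.eq_or_lt
  · refine le_trans (le_of_eq ?_) (exp_pos _).le
    rw [div_eq_zero_iff, Nat.cast_eq_zero, card_eq_zero, filter_eq_empty_iff]
    left
    intro e _
    rw [Fintype.sum_bijective e e.injective.bijective_of_finite _ _ fun _ ↦ rfl]
    simpa using hε
  have hm' : (0 : ℝ) < m := by exact_mod_cast hm
  have hNm : (0 : ℝ) < N - m := by linarith [(show (m : ℝ) < N by exact_mod_cast hmN)]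
  set r : ℝ := m / (N - m) with hr
  set V : ℝ := m * (N - m + 1) / (N * (N - m) ^ 2) with hV
  have hr0 : 0 < r := div_pos hm' hNm
  have hV0 : 0 < V := div_pos (mul_pos hm' (by linarith)) (mul_pos (by linarith) (pow_pos hNm 2))
  -- the minimiser of `t ^ 2 / 8 * V - t * (r * ε)`
  set t : ℝ := 4 * r * ε / V with ht
  have hexponent : t ^ 2 / 8 * V = -(2 * m * ε ^ 2 * (N / (N - m + 1))) + t * (r * ε) := by
    rw [ht, hr, hV]
    field_simp
    ring
  have hcard : (0 : ℝ) < Fintype.card (Fin m ↪ Fin N) := by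
    have : Nonempty (Fin m ↪ Fin N) := ⟨Fin.castLEEmb hmN.le⟩
    exact_mod_cast Fintype.card_pos
  rw [div_le_iff₀ hcard]
  refine le_of_mul_le_mul_right ?_ (exp_pos (t * (r * ε)))
  calc _ ≤ ∑ e : Fin m ↪ Fin N,
        exp (t * r * ((m : ℝ)⁻¹ * ∑ i, c (e i) - (N : ℝ)⁻¹ * ∑ j, c j)) := by
        rw [← mul_assoc]
        exact card_filter_mul_exp_le_sum_exp _ _ (by positivity)
    _ = ∑ e : Fin m ↪ Fin N, exp (t * ((∑ j, c j) / N - unsampledMean c e)) := by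
        simp_rw [mean_sub_unsampledMean c hm hmN, ← hr, mul_assoc]
    _ ≤ Fintype.card (Fin m ↪ Fin N) *
          exp (t ^ 2 / 8 * ∑ j ∈ range m, 1 / ((N : ℝ) - j - 1) ^ 2) :=
        sum_exp_mul_mean_sub_unsampledMean_le c hc hmN t
    _ ≤ Fintype.card (Fin m ↪ Fin N) * exp (t ^ 2 / 8 * V) := by
        gcongr
        exact sum_range_inv_sq_le hmN
    _ = _ := by rw [hexponent, exp_add]; ring

end Sampling

theorem stmt_15_general (N m : ℕ) (hm : 0 < m) (hmN : m ≤ N)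
    (c : Fin N → ℝ) (hc : ∀ i, c i = 0 ∨ c i = 1)
    (ε δ : ℝ) (hε : 0 < ε) (hδ0 : 0 < δ)
    (hsize : Real.log (1 / δ) ≤ (2 * m * ε ^ 2) * ((N : ℝ) / ((N : ℝ) - m + 1))) :
    ((Finset.univ.filter fun f : Fin m ↪ Fin N =>
        ε ≤ (m : ℝ)⁻¹ * (∑ i, c (f i)) - (N : ℝ)⁻¹ * (∑ j, c j)).card : ℝ) /
        (Fintype.card (Fin m ↪ Fin N) : ℝ) ≤ δ := by
  have hc01 (i : Fin N) : c i ∈ Set.Icc 0 1 := by rcases hc i with h | h <;> simp [h]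
  refine (serfling_tail_bound c hc01 hm hmN hε).trans ?_
  rw [one_div, log_inv] at hsize
  calc _ ≤ exp (log δ) := exp_le_exp.2 (by linarith)
    _ = δ := exp_log hδ0

/-- Inverting Serfling's bound (with `B = 1`) for a `{0,1}`-valued population:
if `(2 m ε²) · (N/(N-m+1)) ≥ ln(1/δ)` then the probability (over a uniformly
random injection modelling sampling without replacement) that the sample mean
exceeds the population mean by `ε` is at most `δ`. -/
theorem stmt_15 (N m : ℕ) (hm : 0 < m) (hmN : m ≤ N)
    (c : Fin N → ℝ) (hc : ∀ i, c i = 0 ∨ c i = 1)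
    (ε δ : ℝ) (hε : 0 < ε) (hδ0 : 0 < δ) (hδ1 : δ < 1)
    (hsize : Real.log (1 / δ) ≤ (2 * m * ε ^ 2) * ((N : ℝ) / ((N : ℝ) - m + 1))) :
    ((Finset.univ.filter fun f : Fin m ↪ Fin N =>
        ε ≤ (m : ℝ)⁻¹ * (∑ i, c (f i)) - (N : ℝ)⁻¹ * (∑ j, c j)).card : ℝ) /
        (Fintype.card (Fin m ↪ Fin N) : ℝ) ≤ δ :=
  stmt_15_general N m hm hmN c hc ε δ hε hδ0 hsize
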